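/- Let W, W̃ ∈ ℝ^{n×n} be symmetric matrices and ε ≥ 0. The following are equivalent: (1) W̃ is a unit-circle ε-approximation of W; (2) W̃ is an undirected ε-approximation of W and −W̃ is an undirected ε-approximation of −W; (3) for all x ∈ ℝ^n, |x^⊤(W − W̃)x| ≤ ε·(‖x‖² − |x^⊤Wx|). -/

import Mathlib

open Matrix

noncomputable section

/-- The sesquilinear form `x* A y`. -/
def sesq {m : Type*} [Fintype m] (A : Matrix m m ℂ) (x y : m → ℂ) : ℂ :=
  star x ⬝ᵥ (A *ᵥ y)

/-- The squared Euclidean norm of a complex vector. -/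
def vnormSq {m : Type*} [Fintype m] (x : m → ℂ) : ℝ :=
  ∑ i, Complex.normSq (x i)

/-- `W̃` is a *unit-circle ε-approximation* of `W`:
for all complex `x, y`, `|x*(W − W̃)y| ≤ (ε/2)(‖x‖² + ‖y‖² − |x*Wx + y*Wy|)`. -/
def UnitCircleApprox {m : Type*} [Fintype m] (ε : ℝ) (W Wt : Matrix m m ℂ) : Prop :=
  ∀ x y : m → ℂ,
    ‖sesq (W - Wt) x y‖ ≤
      ε / 2 * (vnormSq x + vnormSq y - ‖sesq W x x + sesq W y y‖)

/-- `W̃` is an *undirected ε-approximation* of `W` (for symmetric real matrices):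
for all real `x`, `|xᵀ(W − W̃)x| ≤ ε(‖x‖² − xᵀWx)`. -/
def UndirApprox {m : Type*} [Fintype m] (ε : ℝ) (W Wt : Matrix m m ℝ) : Prop :=
  ∀ x : m → ℝ, |x ⬝ᵥ ((W - Wt) *ᵥ x)| ≤ ε * (x ⬝ᵥ x - x ⬝ᵥ (W *ᵥ x))

/-!
For real `x = y`, (1) reads as (3), and (2) ⇔ (3) because for `ε ≥ 0`
`ε(‖x‖² − |xᵀWx|) = min (ε(‖x‖² − xᵀWx)) (ε(‖x‖² + xᵀWx))`.

For (3) ⇒ (1), multiplying `x` by a unit scalar makes `x*(W − W̃)y` real and nonnegative and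
leaves the right-hand side unchanged, so it suffices to bound `Re x*(W − W̃)y`. Writing
`x = p + iq`, `y = r + is`, this real part is `pᵀAr + qᵀAs` with `A = W − W̃`, and
`x*Wx + y*Wy = pᵀWp + qᵀWq + rᵀWr + sᵀWs` is real because `W` is symmetric; let `t = ±1` be
its sign. By (3), `|vᵀAv| ≤ ε(‖v‖² − t·vᵀWv)` for every real `v`, and polarization
(`4uᵀAw = (u+w)ᵀA(u+w) − (u−w)ᵀA(u−w)`) turns this into
`2uᵀAw ≤ ε(‖u‖² + ‖w‖² − t(uᵀWu + wᵀWw))`. Adding the instances `(p, r)` and `(q, s)` gives (1).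
-/

open Complex ComplexConjugate

section RealForms

variable {m R : Type*} [Fintype m]

lemma dotProduct_mulVec_comm_of_isSymm [CommSemiring R] {M : Matrix m m R} (hM : M.IsSymm)
    (x y : m → R) : x ⬝ᵥ M *ᵥ y = y ⬝ᵥ M *ᵥ x := by
  conv_lhs => rw [← hM.eq]
  exact dotProduct_transpose_mulVec M x y

lemma two_mul_dotProduct_mulVec_le [CommRing R] [LinearOrder R] [IsStrictOrderedRing R]
    {A : Matrix m m R} (hA : A.IsSymm) (B : Matrix m m R)
    (h : ∀ v, |v ⬝ᵥ A *ᵥ v| ≤ v ⬝ᵥ B *ᵥ v) (u w : m → R) :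
    2 * (u ⬝ᵥ A *ᵥ w) ≤ u ⬝ᵥ B *ᵥ u + w ⬝ᵥ B *ᵥ w := by
  have hadd := le_of_abs_le (h (u + w))
  have hsub := neg_le_of_abs_le (h (u - w))
  simp only [mulVec_add, mulVec_sub, dotProduct_add, add_dotProduct, dotProduct_sub,
    sub_dotProduct, dotProduct_mulVec_comm_of_isSymm hA w u] at hadd hsub
  linarith

lemma le_mul_sub_abs_iff [CommRing R] [LinearOrder R] [IsStrictOrderedRing R] {a b c ε : R}
    (hε : 0 ≤ ε) : a ≤ ε * (b - |c|) ↔ a ≤ ε * (b - c) ∧ a ≤ ε * (b + c) := by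
  have key : ε * (b - |c|) = min (ε * (b - c)) (ε * (b + c)) := by
    rcases abs_cases c with ⟨habs, hc⟩ | ⟨habs, hc⟩ <;> rw [habs]
    · rw [min_eq_left (by nlinarith)]
    · rw [min_eq_right (by nlinarith), sub_neg_eq_add]
  rw [key, le_min_iff]

end RealForms

section Complexified

variable {m : Type*} [Fintype m]

lemma re_sesq_map_ofReal (M : Matrix m m ℝ) (x y : m → ℂ) :
    (sesq (M.map (↑)) x y).re = (re ∘ x) ⬝ᵥ M *ᵥ (re ∘ y) + (im ∘ x) ⬝ᵥ M *ᵥ (im ∘ y) := by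
  simp [sesq, dotProduct, mulVec, Finset.mul_sum, ← Finset.sum_add_distrib]

lemma im_sesq_map_ofReal (M : Matrix m m ℝ) (x y : m → ℂ) :
    (sesq (M.map (↑)) x y).im = (re ∘ x) ⬝ᵥ M *ᵥ (im ∘ y) - (im ∘ x) ⬝ᵥ M *ᵥ (re ∘ y) := by
  simp [sesq, dotProduct, mulVec, Finset.mul_sum, sub_eq_add_neg, Finset.sum_add_distrib]

lemma im_sesq_map_ofReal_self {M : Matrix m m ℝ} (hM : M.IsSymm) (x : m → ℂ) :
    (sesq (M.map (↑)) x x).im = 0 := by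
  rw [im_sesq_map_ofReal, dotProduct_mulVec_comm_of_isSymm hM, sub_self]

lemma sesq_map_ofReal_comp_ofReal (M : Matrix m m ℝ) (v w : m → ℝ) :
    sesq (M.map (↑)) (ofReal ∘ v) (ofReal ∘ w) = ↑(v ⬝ᵥ M *ᵥ w) := by
  simp [sesq, dotProduct, mulVec]

lemma vnormSq_eq (x : m → ℂ) : vnormSq x = (re ∘ x) ⬝ᵥ (re ∘ x) + (im ∘ x) ⬝ᵥ (im ∘ x) := by
  simp [vnormSq, normSq_apply, dotProduct, Finset.sum_add_distrib]

lemma vnormSq_smul (c : ℂ) (x : m → ℂ) : vnormSq (c • x) = ‖c‖ ^ 2 * vnormSq x := by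
  simp [vnormSq, Finset.mul_sum, normSq_eq_norm_sq, mul_pow]

lemma sesq_smul_left (A : Matrix m m ℂ) (c : ℂ) (x y : m → ℂ) :
    sesq A (c • x) y = conj c * sesq A x y := by
  simp [sesq, star_smul, smul_dotProduct]

lemma sesq_smul_right (A : Matrix m m ℂ) (c : ℂ) (x y : m → ℂ) :
    sesq A x (c • y) = c * sesq A x y := by
  simp [sesq, mulVec_smul]

lemma UnitCircleApprox.of_re_le {ε : ℝ} {W Wt : Matrix m m ℂ}
    (h : ∀ x y, (sesq (W - Wt) x y).re ≤
      ε / 2 * (vnormSq x + vnormSq y - ‖sesq W x x + sesq W y y‖)) :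
    UnitCircleApprox ε W Wt := by
  intro x y
  obtain ⟨c, hc, hcα⟩ := exists_norm_eq_mul_self (sesq (W - Wt) x y)
  have hcc : conj c * c = 1 := by
    rw [mul_comm, mul_conj, normSq_eq_norm_sq, hc]; norm_num
  have key := h (conj c • x) y
  simpa only [sesq_smul_left, sesq_smul_right, conj_conj, ← mul_assoc, hcc, one_mul, ← hcα,
    ofReal_re, vnormSq_smul, norm_conj, hc, one_pow] using key

end Complexified

section RealSymmetric

variable {m : Type*} [Fintype m] {ε : ℝ} {W Wt : Matrix m m ℝ}

lemma UnitCircleApprox.abs_dotProduct_sub_mulVec_le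
    (h : UnitCircleApprox ε (W.map (↑)) (Wt.map (↑))) (v : m → ℝ) :
    |v ⬝ᵥ (W - Wt) *ᵥ v| ≤ ε * (v ⬝ᵥ v - |v ⬝ᵥ W *ᵥ v|) := by
  have hv := h (ofReal ∘ v) (ofReal ∘ v)
  have hnorm : vnormSq (ofReal ∘ v) = v ⬝ᵥ v := by simp [vnormSq, dotProduct]
  rw [← Matrix.map_sub _ ofReal_sub, sesq_map_ofReal_comp_ofReal, sesq_map_ofReal_comp_ofReal,
    hnorm, ← ofReal_add, norm_real, norm_real, Real.norm_eq_abs, Real.norm_eq_abs,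
    ← two_mul, ← two_mul, abs_mul, abs_two] at hv
  linarith

lemma undirApprox_and_undirApprox_neg_iff (hε : 0 ≤ ε) :
    UndirApprox ε W Wt ∧ UndirApprox ε (-W) (-Wt) ↔
      ∀ v : m → ℝ, |v ⬝ᵥ (W - Wt) *ᵥ v| ≤ ε * (v ⬝ᵥ v - |v ⬝ᵥ W *ᵥ v|) := by
  have hneg : ∀ v : m → ℝ, v ⬝ᵥ (-W - -Wt) *ᵥ v = -(v ⬝ᵥ (W - Wt) *ᵥ v) := fun v => by
    rw [neg_sub_neg, ← neg_sub, neg_mulVec, dotProduct_neg]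
  simp only [UndirApprox, hneg]
  simp only [abs_neg, neg_mulVec, dotProduct_neg, sub_neg_eq_add, le_mul_sub_abs_iff hε,
    forall_and]

lemma re_sesq_map_ofReal_le {A : Matrix m m ℝ} (hA : A.IsSymm) (hε : 0 ≤ ε)
    (h : ∀ v : m → ℝ, |v ⬝ᵥ A *ᵥ v| ≤ ε * (v ⬝ᵥ v - |v ⬝ᵥ W *ᵥ v|)) {t : ℝ} (ht : |t| ≤ 1)
    (x y : m → ℂ) :
    (sesq (A.map (↑)) x y).re ≤
      ε / 2 * (vnormSq x + vnormSq y - t * (sesq (W.map (↑)) x x + sesq (W.map (↑)) y y).re) := by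
  classical
  have hB : ∀ v, v ⬝ᵥ (ε • (1 - t • W)) *ᵥ v = ε * (v ⬝ᵥ v - t * (v ⬝ᵥ W *ᵥ v)) := by
    simp [smul_mulVec, sub_mulVec, dotProduct_sub]
  have hAB : ∀ v, |v ⬝ᵥ A *ᵥ v| ≤ v ⬝ᵥ (ε • (1 - t • W)) *ᵥ v := by
    intro v
    have htW : t * (v ⬝ᵥ W *ᵥ v) ≤ |v ⬝ᵥ W *ᵥ v| :=
      calc t * (v ⬝ᵥ W *ᵥ v) ≤ |t| * |v ⬝ᵥ W *ᵥ v| := by rw [← abs_mul]; exact le_abs_self _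
        _ ≤ |v ⬝ᵥ W *ᵥ v| := mul_le_of_le_one_left (abs_nonneg _) ht
    rw [hB]
    linarith [h v, mul_le_mul_of_nonneg_left htW hε]
  have hre := two_mul_dotProduct_mulVec_le hA _ hAB (re ∘ x) (re ∘ y)
  have him := two_mul_dotProduct_mulVec_le hA _ hAB (im ∘ x) (im ∘ y)
  rw [hB, hB] at hre him
  rw [add_re, re_sesq_map_ofReal, re_sesq_map_ofReal, re_sesq_map_ofReal, vnormSq_eq, vnormSq_eq]
  linear_combination (hre + him) / 2

lemma unitCircleApprox_map_ofReal (hε : 0 ≤ ε) (hW : W.IsSymm) (hWt : Wt.IsSymm)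
    (h : ∀ v : m → ℝ, |v ⬝ᵥ (W - Wt) *ᵥ v| ≤ ε * (v ⬝ᵥ v - |v ⬝ᵥ W *ᵥ v|)) :
    UnitCircleApprox ε (W.map (↑)) (Wt.map (↑)) := by
  refine UnitCircleApprox.of_re_le fun x y => ?_
  have him : (sesq (W.map (↑)) x x + sesq (W.map (↑)) y y).im = 0 := by
    rw [add_im, im_sesq_map_ofReal_self hW, im_sesq_map_ofReal_self hW, add_zero]
  rw [← Matrix.map_sub _ ofReal_sub, ← abs_re_eq_norm.2 him]
  have hle := fun t (ht : |t| ≤ 1) => re_sesq_map_ofReal_le (hW.sub hWt) hε h ht x y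
  rcases abs_cases (sesq (W.map (↑)) x x + sesq (W.map (↑)) y y).re with ⟨habs, _⟩ | ⟨habs, _⟩
  · rw [habs]; simpa using hle 1 (by simp)
  · rw [habs]; simpa using hle (-1) (by simp)

end RealSymmetric

/-- For symmetric real `W, W̃` and `ε ≥ 0`, the following are
equivalent: (1) `W̃` is a unit-circle ε-approximation of `W`; (2) `W̃ ≈_ε W` and
`−W̃ ≈_ε −W` (undirected); (3) `∀ x, |xᵀ(W − W̃)x| ≤ ε(‖x‖² − |xᵀWx|)`. -/
theorem real_symmetric_unitCircle_equiv {n : ℕ} (ε : ℝ) (hε : 0 ≤ ε)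
    (W Wt : Matrix (Fin n) (Fin n) ℝ) (hW : W.IsSymm) (hWt : Wt.IsSymm) :
    List.TFAE
      [UnitCircleApprox ε (W.map Complex.ofReal) (Wt.map Complex.ofReal),
       UndirApprox ε W Wt ∧ UndirApprox ε (-W) (-Wt),
       ∀ x : Fin n → ℝ,
         |x ⬝ᵥ ((W - Wt) *ᵥ x)| ≤ ε * (x ⬝ᵥ x - |x ⬝ᵥ (W *ᵥ x)|)] := by
  tfae_have 1 → 3 := UnitCircleApprox.abs_dotProduct_sub_mulVec_le
  tfae_have 2 ↔ 3 := undirApprox_and_undirApprox_neg_iff hε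
  tfae_have 3 → 1 := unitCircleApprox_map_ofReal hε hW hWt
  tfae_finish

end
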